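/- arXiv:0907.5398 — 5 statements merged into one kernel-verified Lean document; each statement's English description precedes it below -/
import Mathlib

section
/- Let a, b ∈ ℂ with a ≠ 0 and b ≠ 0, and let F : ℂ → ℂ be the cosine map F(z) = a·e^z + b·e^{−z}. Then F has no finite asymptotic value: there is no w ∈ ℂ for which there exists a continuous curve γ : [0,∞) → ℂ with |γ(t)| → ∞ and F(γ(t)) → w as t → ∞. -/
/-!
If `F (γ t) → w`, then `F ∘ γ` is eventually bounded, which confines `γ` to a vertical strip
`|Re z| ≤ M`, so `|Im γ| → ∞`. By continuity `Im γ` then meets every class `θ + 2πℤ` at arbitrarily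
large times; as `F` is `2πi`-periodic and `[-M, M] + θi` is compact, `w = F (s + θi)` for some real
`s`. Taking `θ = 0, π/2, π` gives three distinct roots `u = eᶻ` of `a u² - w u + b = 0`, which is
impossible for `a ≠ 0`.
-/

open Complex Filter Set Function Topology

theorem ContinuousOn.frequently_eq_add_int_mul_of_tendsto_abs {h : ℝ → ℝ}
    (hh : ContinuousOn h (Ici 0)) (habs : Tendsto (fun t => |h t|) atTop atTop) {p : ℝ}
    (hp : 0 < p) (θ : ℝ) :
    ∃ᶠ t in atTop, ∃ k : ℤ, h t = θ + k * p := by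
  rw [frequently_atTop]
  intro n
  set T := max n 0
  obtain ⟨s, hTs, hs⟩ :=
    ((eventually_ge_atTop T).and (habs.eventually_ge_atTop (|h T| + p))).exists
  set lo := min (h T) (h s)
  have hlen : lo + p ≤ max (h T) (h s) := by
    have := max_sub_min_eq_abs (h T) (h s)
    linarith [abs_sub_abs_le_abs_sub (h s) (h T)]
  -- `toIcoMod` picks the point of `θ + pℤ` in `[lo, lo + p)`, which lies between `h T` and `h s`
  have hy : toIcoMod hp lo θ ∈ uIcc (h T) (h s) :=
    Ico_subset_Icc_self.trans (Icc_subset_Icc_right hlen) (toIcoMod_mem_Ico hp lo θ)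
  have hTs' : uIcc T s ⊆ Ici 0 := by
    rw [uIcc_of_le hTs]; exact fun x hx => (le_max_right n 0).trans hx.1
  obtain ⟨t, ht, hty⟩ := intermediate_value_uIcc (hh.mono hTs') hy
  rw [uIcc_of_le hTs] at ht
  refine ⟨t, (le_max_left n 0).trans ht.1, -toIcoDiv hp lo θ, ?_⟩
  rw [hty, ← self_sub_toIcoDiv_zsmul, zsmul_eq_mul]
  push_cast; ring

theorem Function.Periodic.exists_apply_add_mul_I_eq_of_tendsto {X : Type*} [TopologicalSpace X]
    [T2Space X] {f : ℂ → X} (hf : Continuous f) {p : ℝ} (hp : 0 < p) (hper : Periodic f (p * I))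
    {γ : ℝ → ℂ} (hγ : ContinuousOn γ (Ici 0)) {M : ℝ} (hre : ∀ᶠ t in atTop, |(γ t).re| ≤ M)
    (him : Tendsto (fun t => |(γ t).im|) atTop atTop) {w : X}
    (hw : Tendsto (fun t => f (γ t)) atTop (𝓝 w)) (θ : ℝ) :
    ∃ s : ℝ, f (s + θ * I) = w := by
  set K := (fun s : ℝ => f (s + θ * I)) '' Icc (-M) M
  have hK : IsClosed K := (isCompact_Icc.image (by fun_prop)).isClosed
  have hθ :=
    (continuous_im.comp_continuousOn hγ).frequently_eq_add_int_mul_of_tendsto_abs him hp θ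
  have hmem : ∃ᶠ t in atTop, f (γ t) ∈ K := by
    refine (hθ.and_eventually hre).mono fun t ⟨⟨k, hk⟩, ht⟩ => ⟨(γ t).re, abs_le.mp ht, ?_⟩
    show f _ = _
    rw [← (hper.int_mul k) ((γ t).re + θ * I)]
    congr 1
    apply Complex.ext <;> simp [show (γ t).im = θ + k * p from hk]
  obtain ⟨s, -, hs⟩ := hK.mem_of_frequently_of_tendsto hmem hw
  exact ⟨s, hs⟩

theorem mul_mul_eq_of_add_inv_eq {K : Type*} [Field K] {a b u v : K} (hu : u ≠ 0) (hv : v ≠ 0)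
    (huv : u ≠ v) (h : a * u + b * u⁻¹ = a * v + b * v⁻¹) : a * u * v = b := by
  have : (u - v) * (a * u * v - b) = 0 := by
    field_simp at h
    linear_combination h
  exact sub_eq_zero.mp ((mul_eq_zero.mp this).resolve_left (sub_ne_zero.mpr huv))

theorem Complex.arg_exp_of_im_mem_Ioc {z : ℂ} (hz : z.im ∈ Ioc (-Real.pi) Real.pi) :
    arg (exp z) = z.im := by
  rw [arg_exp, toIocMod_eq_self]
  rwa [show -Real.pi + 2 * Real.pi = Real.pi by ring]

noncomputable def cosineMap (a b z : ℂ) : ℂ := a * exp z + b * exp (-z)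

namespace cosineMap

variable (a b : ℂ)

@[fun_prop]
theorem continuous : Continuous (cosineMap a b) := by
  unfold cosineMap; fun_prop

theorem periodic : Periodic (cosineMap a b) ((2 * Real.pi : ℝ) * I) := by
  intro z
  simp only [cosineMap, neg_add, exp_add]
  push_cast
  rw [exp_neg (2 * Real.pi * I), exp_two_pi_mul_I]
  ring

theorem apply_neg (z : ℂ) : cosineMap a b (-z) = cosineMap b a z := by
  simp only [cosineMap, neg_neg]; ring

variable {a b}

theorem re_le_of_norm_le (ha : a ≠ 0) {C : ℝ} {z : ℂ} (hz : ‖cosineMap a b z‖ ≤ C) :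
    z.re ≤ max 0 (Real.log ((C + ‖b‖) / ‖a‖)) := by
  rcases le_or_gt z.re 0 with hre | hre
  · exact le_max_of_le_left hre
  have hexp : Real.exp z.re * ‖a‖ ≤ C + ‖b‖ :=
    calc Real.exp z.re * ‖a‖ = ‖a * exp z‖ := by rw [norm_mul, norm_exp, mul_comm]
      _ ≤ ‖cosineMap a b z‖ + ‖b * exp (-z)‖ := norm_le_add_norm_add _ _
      _ ≤ C + ‖b‖ := by
        gcongr
        rw [norm_mul, norm_exp, neg_re]
        exact mul_le_of_le_one_right (norm_nonneg b) (Real.exp_le_one_iff.mpr (by linarith))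
  have hpos : 0 < ‖a‖ := norm_pos_iff.mpr ha
  rw [← le_div_iff₀ hpos] at hexp
  exact le_max_of_le_right ((Real.le_log_iff_exp_le ((Real.exp_pos _).trans_le hexp)).mpr hexp)

theorem exists_abs_re_le_of_norm_le (ha : a ≠ 0) (hb : b ≠ 0) (C : ℝ) :
    ∃ M, ∀ z, ‖cosineMap a b z‖ ≤ C → |z.re| ≤ M := by
  refine ⟨max (max 0 (Real.log ((C + ‖b‖) / ‖a‖))) (max 0 (Real.log ((C + ‖a‖) / ‖b‖))),
    fun z hz => abs_le.mpr
      ⟨neg_le.mp (le_max_of_le_right ?_), le_max_of_le_left (re_le_of_norm_le ha hz)⟩⟩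
  simpa using re_le_of_norm_le hb (z := -z) (by rwa [apply_neg])

-- In terms of `u = exp z`, `cosineMap a b z = w` is the quadratic equation `a u² - w u + b = 0`.
theorem exp_eq_of_apply_eq (ha : a ≠ 0) {z₀ z₁ z₂ : ℂ} (h₁ : cosineMap a b z₀ = cosineMap a b z₁)
    (h₂ : cosineMap a b z₀ = cosineMap a b z₂) (h₀₁ : exp z₀ ≠ exp z₁) (h₀₂ : exp z₀ ≠ exp z₂) :
    exp z₁ = exp z₂ := by
  simp only [cosineMap, exp_neg] at h₁ h₂
  have e₁ := mul_mul_eq_of_add_inv_eq (exp_ne_zero _) (exp_ne_zero _) h₀₁ h₁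
  have e₂ := mul_mul_eq_of_add_inv_eq (exp_ne_zero _) (exp_ne_zero _) h₀₂ h₂
  exact mul_left_cancel₀ (mul_ne_zero ha (exp_ne_zero z₀)) (e₁.trans e₂.symm)

theorem not_forall_exists_apply_add_mul_I_eq (ha : a ≠ 0) (w : ℂ) :
    ¬ ∀ θ : ℝ, ∃ s : ℝ, cosineMap a b (s + θ * I) = w := by
  intro h
  obtain ⟨s₀, h₀⟩ := h 0
  obtain ⟨s₁, h₁⟩ := h (Real.pi / 2)
  obtain ⟨s₂, h₂⟩ := h Real.pi
  have hne : ∀ {s s' θ θ' : ℝ}, θ ∈ Ioc (-Real.pi) Real.pi → θ' ∈ Ioc (-Real.pi) Real.pi →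
      θ ≠ θ' → exp (s + θ * I) ≠ exp (s' + θ' * I) := fun hθ hθ' hne h => hne <| by
    simpa [arg_exp_of_im_mem_Ioc, hθ, hθ'] using congrArg arg h
  have hπ := Real.pi_pos
  have m₀ : (0 : ℝ) ∈ Ioc (-Real.pi) Real.pi := ⟨by linarith, hπ.le⟩
  have m₁ : Real.pi / 2 ∈ Ioc (-Real.pi) Real.pi := ⟨by linarith, by linarith⟩
  have m₂ : Real.pi ∈ Ioc (-Real.pi) Real.pi := ⟨by linarith, le_rfl⟩
  exact hne m₁ m₂ (by linarith) (exp_eq_of_apply_eq ha (h₀.trans h₁.symm) (h₀.trans h₂.symm)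
    (hne m₀ m₁ (by linarith)) (hne m₀ m₂ hπ.ne))

end cosineMap

/-- The cosine map `F(z) = a·e^z + b·e^{-z}` with `a, b ≠ 0` has no finite
asymptotic value: there is no `w ∈ ℂ` together with a continuous curve
`γ : [0,∞) → ℂ` with `|γ(t)| → ∞` and `F(γ(t)) → w` as `t → ∞`. -/
theorem cosine_map_no_asymptotic_values (a b : ℂ) (ha : a ≠ 0) (hb : b ≠ 0)
    (F : ℂ → ℂ) (hF : ∀ z, F z = a * Complex.exp z + b * Complex.exp (-z)) :
    ¬ ∃ (w : ℂ) (γ : ℝ → ℂ), ContinuousOn γ (Set.Ici 0) ∧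
      Tendsto (fun t => ‖γ t‖) atTop atTop ∧
      Tendsto (fun t => F (γ t)) atTop (nhds w) := by
  rintro ⟨w, γ, hγ, hnorm, hw⟩
  obtain rfl : F = cosineMap a b := funext hF
  obtain ⟨M, hM⟩ := cosineMap.exists_abs_re_le_of_norm_le ha hb (‖w‖ + 1)
  have hre : ∀ᶠ t in atTop, |(γ t).re| ≤ M :=
    (hw.norm.eventually (gt_mem_nhds (lt_add_one _))).mono fun t ht => hM _ ht.le
  have him : Tendsto (fun t => |(γ t).im|) atTop atTop :=
    tendsto_atTop_mono' _ (hre.mono fun t ht => by linarith [norm_le_abs_re_add_abs_im (γ t)])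
      (tendsto_atTop_add_const_right _ (-M) hnorm)
  exact cosineMap.not_forall_exists_apply_add_mul_I_eq ha w
    ((cosineMap.periodic a b).exists_apply_add_mul_I_eq_of_tendsto
      (cosineMap.continuous a b) Real.two_pi_pos hγ hre him hw)
end

section
/- Let f : ℂ → ℂ be the entire map f(z) = π·sinh(z). Then the escaping set I(f) = {z ∈ ℂ : f^n(z) → ∞ as n → ∞} is nonempty and disconnected (it is not a preconnected subset of ℂ). Indeed, I(f) is disjoint from the imaginary axis, which separates the plane into two open half-planes each of which contains escaping points. -/
/-!
On the real axis `π·sinh x ≥ 3x` for `x ≥ 0`, so `1` escapes, and by oddness so does `-1`.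
The imaginary axis is invariant, since `π·sinh (iy) = iπ·sin y`, and the map is bounded by `π`
there, so no point of it escapes. Hence `Re` takes both signs on `I(f)` but never vanishes,
and the intermediate value theorem rules out preconnectedness.
-/

open Complex Filter Set Function

def escapingSet {E : Type*} [Norm E] (f : E → E) : Set E :=
  {z | Tendsto (fun n : ℕ => ‖f^[n] z‖) atTop atTop}

theorem neg_mem_escapingSet {E : Type*} [SeminormedAddGroup E] {f : E → E} (hf : Function.Odd f)
    {z : E} (hz : z ∈ escapingSet f) : -z ∈ escapingSet f := by
  simpa only [escapingSet, mem_ofPred_eq, (Commute.iterate_left hf _).eq, norm_neg] using hz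

theorem notMem_escapingSet_of_mapsTo {E : Type*} [Norm E] {f : E → E} {s : Set E} {C : ℝ}
    (hs : MapsTo f s s) (hC : ∀ z ∈ s, ‖f z‖ ≤ C) {z : E} (hz : z ∈ s) :
    z ∉ escapingSet f := by
  intro hesc
  obtain ⟨n, hn⟩ := ((hesc.comp (tendsto_add_atTop_nat 1)).eventually_gt_atTop C).exists
  rw [comp_apply, iterate_succ_apply'] at hn
  exact (hC _ (hs.iterate n hz)).not_gt hn

theorem tendsto_iterate_atTop_of_mul_le {g : ℝ → ℝ} {c x : ℝ} (hc : 1 < c)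
    (hg : ∀ y, 0 ≤ y → c * y ≤ g y) (hx : 0 < x) : Tendsto (fun n => g^[n] x) atTop atTop := by
  have hgrowth : ∀ n : ℕ, c ^ n * x ≤ g^[n] x := by
    intro n
    induction n with
    | zero => simp
    | succ n ih =>
      have hnonneg : 0 ≤ g^[n] x := (by positivity : 0 ≤ c ^ n * x).trans ih
      calc c ^ (n + 1) * x = c * (c ^ n * x) := by ring
        _ ≤ c * g^[n] x := by gcongr
        _ ≤ g^[n + 1] x := by rw [iterate_succ_apply']; exact hg _ hnonneg
  exact tendsto_atTop_mono hgrowth ((tendsto_pow_atTop_atTop_of_one_lt hc).atTop_mul_const hx)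

theorem three_mul_le_pi_mul_sinh {x : ℝ} (hx : 0 ≤ x) : 3 * x ≤ Real.pi * Real.sinh x :=
  mul_le_mul Real.pi_gt_three.le (Real.self_le_sinh_iff.2 hx) hx Real.pi_pos.le

theorem one_mem_escapingSet_pi_sinh :
    (1 : ℂ) ∈ escapingSet fun z => (Real.pi : ℂ) * sinh z := by
  have hsemiconj : Semiconj ((↑) : ℝ → ℂ) (fun x => Real.pi * Real.sinh x)
      (fun z => (Real.pi : ℂ) * sinh z) := fun x => by push_cast; rfl
  have hreal := tendsto_iterate_atTop_of_mul_le (by norm_num) (fun _ => three_mul_le_pi_mul_sinh)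
    one_pos
  simpa only [escapingSet, mem_ofPred_eq, ← ofReal_one, ← (hsemiconj.iterate_right _).eq,
    norm_real, Real.norm_eq_abs, comp_def] using tendsto_abs_atTop_atTop.comp hreal

theorem re_ne_zero_of_mem_escapingSet_pi_sinh {z : ℂ}
    (hz : z ∈ escapingSet fun z => (Real.pi : ℂ) * sinh z) : z.re ≠ 0 := by
  have hsinh : ∀ w : ℂ, w.re = 0 → sinh w = Real.sin w.im * I := fun w hw => by
    conv_lhs => rw [← re_add_im w, hw, ofReal_zero, zero_add]
    rw [sinh_mul_I, ofReal_sin]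
  refine fun hre => notMem_escapingSet_of_mapsTo (s := {w : ℂ | w.re = 0}) (C := Real.pi)
    (fun w hw => ?_) (fun w hw => ?_) hre hz
  · simp [hsinh w hw]
  · rw [hsinh w hw, norm_mul, norm_mul, norm_real, norm_real, norm_I, mul_one,
      Real.norm_of_nonneg Real.pi_pos.le, Real.norm_eq_abs]
    exact mul_le_of_le_one_right Real.pi_pos.le (Real.abs_sin_le_one _)

/-- For `f(z) = π·sinh(z)`, the escaping set
`I(f) = {z : fⁿ(z) → ∞}` is nonempty and not preconnected; moreover `I(f)` is
disjoint from the imaginary axis and meets both open half-planes. -/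
theorem pi_sinh_escaping_set_disconnected (f : ℂ → ℂ)
    (hf : ∀ z, f z = (Real.pi : ℂ) * Complex.sinh z)
    (I : Set ℂ)
    (hI : I = {z : ℂ | Tendsto (fun n : ℕ => ‖f^[n] z‖) atTop atTop}) :
    I.Nonempty ∧ ¬ IsPreconnected I ∧
    (∀ z ∈ I, z.re ≠ 0) ∧ (∃ z ∈ I, 0 < z.re) ∧ (∃ z ∈ I, z.re < 0) := by
  obtain rfl : f = fun z => (Real.pi : ℂ) * sinh z := funext hf
  obtain rfl : I = escapingSet _ := hI
  have hpos := one_mem_escapingSet_pi_sinh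
  have hneg := neg_mem_escapingSet (fun z => by simp only [sinh_neg, mul_neg]) hpos
  have haxis := fun z (hz : z ∈ escapingSet _) => re_ne_zero_of_mem_escapingSet_pi_sinh hz
  refine ⟨⟨1, hpos⟩, fun hconn => ?_, haxis, ⟨1, hpos, by simp⟩, ⟨-1, hneg, by simp⟩⟩
  obtain ⟨z, hz, hre⟩ := hconn.intermediate_value₂ hneg hpos continuous_re.continuousOn
    (continuousOn_const (c := 0)) (by simp) (by simp)
  exact haxis z hz hre
end

section
/- Let f : ℂ → ℂ be any function and let a, b ∈ ℂ with a ≠ 0 such that f(cos z) = cos(a·z + b) for all z ∈ ℂ. Then a is an integer, b is an integer multiple of π, and f is a polynomial map: writing a = n ∈ ℤ and b = mπ with m ∈ ℤ, one has f(w) = (−1)^m · T_n(w) for all w ∈ ℂ, where T_n is the n-th Chebyshev polynomial (characterized by T_n(cos θ) = cos(nθ)). In particular, no transcendental entire function f can satisfy f(cos z) = cos(a·z + b) with a ≠ 0. -/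
open Complex
open scoped Real

/-!
Evenness and `2π`-periodicity of `cos z` pass through `f` to `z ↦ cos (a z + b)`.
Since `a ≠ 0`, this makes `a · 2π` a period of `cos`, so `a ∈ ℤ`, and makes `b` a centre of
symmetry of `cos`, so `sin b = 0`. Then `cos (n z + m π) = (-1)^m T_n (cos z)`, and `cos` is
surjective.
-/

namespace Complex

theorem cos_add_int_mul_pi (x : ℂ) (n : ℤ) : cos (x + n * π) = (-1) ^ n * cos x :=
  n.cast_negOnePow ℂ ▸ cos_antiperiodic.add_int_mul_eq n

theorem exists_int_mul_two_pi_eq_of_periodic_cos {c : ℂ} (h : Function.Periodic cos c) :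
    ∃ k : ℤ, k * (2 * π) = c :=
  cos_eq_one_iff.1 (by simpa using h 0)

theorem sin_eq_zero_of_forall_cos_add_eq_cos_sub {b : ℂ} (h : ∀ w, cos (b + w) = cos (b - w)) :
    sin b = 0 := by
  have h' := h (π / 2)
  rw [cos_add_pi_div_two, cos_sub_pi_div_two, neg_eq_iff_add_eq_zero, ← two_mul] at h'
  exact (mul_eq_zero.1 h').resolve_left two_ne_zero

end Complex

section Semiconjugacy

variable {f : ℂ → ℂ} {a b : ℂ}

theorem periodic_cos_mul_two_pi_of_semiconj (ha : a ≠ 0)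
    (hf : ∀ z, f (cos z) = cos (a * z + b)) :
    Function.Periodic cos (a * (2 * π)) := by
  intro x
  have hx : a * ((x - b) / a) + b = x := by field_simp; ring
  calc cos (x + a * (2 * π)) = cos (a * ((x - b) / a + 2 * π) + b) := by
        rw [mul_add, add_right_comm, hx]
    _ = cos x := by rw [← hf, cos_add_two_pi, hf, hx]

theorem cos_add_eq_cos_sub_of_semiconj (ha : a ≠ 0)
    (hf : ∀ z, f (cos z) = cos (a * z + b)) (w : ℂ) : cos (b + w) = cos (b - w) := by
  have hw : a * (w / a) = w := mul_div_cancel₀ w ha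
  calc cos (b + w) = cos (a * (w / a) + b) := by rw [hw, add_comm]
    _ = cos (a * -(w / a) + b) := by rw [← hf, ← hf, cos_neg]
    _ = cos (b - w) := by rw [mul_neg, hw]; ring_nf

end Semiconjugacy

/-- If `f(cos z) = cos(a·z + b)` for all `z` with `a ≠ 0`, then `a` is an
integer `n`, `b` is an integer multiple `mπ` of `π`, and
`f = (-1)^m · T_n` with `T_n` the `n`-th Chebyshev polynomial. In particular
no transcendental entire function satisfies such an identity. -/
theorem cos_semiconjugacy_is_chebyshev (f : ℂ → ℂ) (a b : ℂ) (ha : a ≠ 0)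
    (hf : ∀ z : ℂ, f (Complex.cos z) = Complex.cos (a * z + b)) :
    ∃ n m : ℤ, a = (n : ℂ) ∧ b = (m : ℂ) * (Real.pi : ℂ) ∧
      ∀ w : ℂ, f w = (-1 : ℂ) ^ m * (Polynomial.Chebyshev.T ℂ n).eval w := by
  obtain ⟨n, hn⟩ :=
    exists_int_mul_two_pi_eq_of_periodic_cos (periodic_cos_mul_two_pi_of_semiconj ha hf)
  have han : a = n := (mul_right_cancel₀ (by simp [Real.pi_ne_zero]) hn).symm
  obtain ⟨m, hm⟩ := sin_eq_zero_iff.1 (sin_eq_zero_of_forall_cos_add_eq_cos_sub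
    (cos_add_eq_cos_sub_of_semiconj ha hf))
  refine ⟨n, m, han, hm, fun w => ?_⟩
  obtain ⟨z, rfl⟩ := cos_surjective w
  rw [hf, Polynomial.Chebyshev.T_complex_cos, han, hm, cos_add_int_mul_pi]
end

section
/- Let Φ : ℂ → ℂ be an entire function, let λ ∈ ℂ, and suppose Φ(λ·z) = Φ(z)² − 1 for all z ∈ ℂ (i.e., Φ semiconjugates multiplication by λ to the polynomial p(z) = z² − 1). Suppose there exists z̃ ∈ ℂ with Φ(z̃) = 0 and Φ′(z̃) = 0. Then for every n ≥ 1 and every k with 1 ≤ k ≤ n, the k-th derivative of Φ vanishes at the point λ^n·z̃: Φ^{(k)}(λ^n·z̃) = 0. In particular, the local degree of Φ at λ^n·z̃ is at least n + 1, so Φ has points in ℂ of arbitrarily large local degree. -/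
/-!
Writing `wₙ = λⁿ z̃`, the functional equation gives
`Φ(λz) - Φ(λw) = (Φ(z) - Φ(w)) (Φ(z) + Φ(w))`, so the local degree of `Φ` at `λw` is that at `w`
plus the order of `Φ + Φ(w)` at `w`. At a zero of `Φ` the two factors coincide and the local
degree doubles; otherwise it does not drop. The values `Φ(wₙ)` alternate between `0` and `-1`,
and starting from local degree `≥ 2` at `z̃` this gives local degree `≥ n + 2` at `wₙ`, i.e.
`Φ⁽ᵏ⁾(wₙ) = 0` for `1 ≤ k ≤ n + 1`.
-/

/-- Junk value `0` when `f` is not analytic at `z₀`. -/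
noncomputable def localDegree {𝕜 E : Type*} [NontriviallyNormedField 𝕜] [NormedAddCommGroup E]
    [NormedSpace 𝕜 E] (f : 𝕜 → E) (z₀ : 𝕜) : ℕ∞ :=
  analyticOrderAt (f · - f z₀) z₀

theorem natCast_add_one_le_localDegree_iff {𝕜 E : Type*} [NontriviallyNormedField 𝕜]
    [CharZero 𝕜] [NormedAddCommGroup E] [NormedSpace 𝕜 E] [CompleteSpace E] {f : 𝕜 → E}
    {z₀ : 𝕜} (hf : AnalyticAt 𝕜 f z₀) {n : ℕ} :
    ((n + 1 : ℕ) : ℕ∞) ≤ localDegree f z₀ ↔ ∀ k, 1 ≤ k → k ≤ n → iteratedDeriv k f z₀ = 0 := by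
  have hderiv : ∀ k, 0 < k → iteratedDeriv k (f · - f z₀) z₀ = iteratedDeriv k f z₀ := by
    intro k hk
    simp_rw [sub_eq_neg_add]
    exact iteratedDeriv_const_add hk _
  rw [localDegree, natCast_le_analyticOrderAt_iff_iteratedDeriv_eq_zero (by fun_prop),
    Nat.forall_lt_succ_left]
  simp only [iteratedDeriv_zero, sub_self, true_and]
  constructor
  · intro h k hk hkn
    obtain ⟨i, rfl⟩ : ∃ i, k = i + 1 := ⟨k - 1, by omega⟩
    rw [← hderiv (i + 1) i.succ_pos]
    exact h i (by omega)
  · intro h i hi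
    rw [hderiv (i + 1) i.succ_pos]
    exact h (i + 1) (by omega) (by omega)

theorem analyticOrderAt_comp_const_mul {𝕜 E : Type*} [NontriviallyNormedField 𝕜] [CharZero 𝕜]
    [CompleteSpace 𝕜] [NormedAddCommGroup E] [NormedSpace 𝕜 E] {f : 𝕜 → E} {c : 𝕜}
    (hc : c ≠ 0) (z₀ : 𝕜) :
    analyticOrderAt (fun z ↦ f (c * z)) z₀ = analyticOrderAt f (c * z₀) := by
  have hg : AnalyticAt 𝕜 (c * ·) z₀ := by fun_prop
  have hg' : deriv (c * ·) z₀ ≠ 0 := by simpa using hc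
  exact analyticOrderAt_comp_of_deriv_ne_zero (f := f) hg hg'

section SemiconjSqSubOne

variable {𝕜 : Type*} [NontriviallyNormedField 𝕜] {Φ : 𝕜 → 𝕜} {c : 𝕜}

theorem ne_zero_of_map_mul_eq_sq_sub_one (hfun : ∀ z, Φ (c * z) = Φ z ^ 2 - 1) {w : 𝕜}
    (hw : Φ w = 0) : c ≠ 0 := by
  rintro rfl
  have h0 := hfun 0
  have hw' := hfun w
  simp only [zero_mul, hw] at h0 hw'
  rw [hw'] at h0
  norm_num at h0

variable [CharZero 𝕜] [CompleteSpace 𝕜]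

theorem localDegree_const_mul (hc : c ≠ 0) (hfun : ∀ z, Φ (c * z) = Φ z ^ 2 - 1) {w : 𝕜}
    (hΦ : AnalyticAt 𝕜 Φ w) :
    localDegree Φ (c * w) = localDegree Φ w + analyticOrderAt (Φ · + Φ w) w := by
  have hfactor : (fun z ↦ Φ (c * z) - Φ (c * w)) = (Φ · - Φ w) * (Φ · + Φ w) := by
    funext z
    simp only [hfun, Pi.mul_apply]
    ring
  rw [localDegree, localDegree, ← analyticOrderAt_comp_const_mul hc, hfactor,
    analyticOrderAt_mul (by fun_prop) (by fun_prop)]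

theorem localDegree_le_localDegree_const_mul (hc : c ≠ 0)
    (hfun : ∀ z, Φ (c * z) = Φ z ^ 2 - 1) {w : 𝕜} (hΦ : AnalyticAt 𝕜 Φ w) :
    localDegree Φ w ≤ localDegree Φ (c * w) := by
  rw [localDegree_const_mul hc hfun hΦ]
  exact le_self_add

theorem localDegree_const_mul_of_map_eq_zero (hc : c ≠ 0)
    (hfun : ∀ z, Φ (c * z) = Φ z ^ 2 - 1) {w : 𝕜} (hΦ : AnalyticAt 𝕜 Φ w) (hw : Φ w = 0) :
    localDegree Φ (c * w) = 2 * localDegree Φ w := by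
  rw [localDegree_const_mul hc hfun hΦ, two_mul, localDegree, hw]
  simp only [sub_zero, add_zero]

theorem localDegree_orbit (hfun : ∀ z, Φ (c * z) = Φ z ^ 2 - 1) (hΦ : ∀ z, AnalyticAt 𝕜 Φ z)
    {w : 𝕜} (hw : Φ w = 0) (hdeg : 2 ≤ localDegree Φ w) (n : ℕ) :
    (Φ (c ^ n * w) = 0 ∧ n + 2 ≤ localDegree Φ (c ^ n * w)) ∨
      (Φ (c ^ n * w) = -1 ∧ n + 3 ≤ localDegree Φ (c ^ n * w)) := by
  have hc := ne_zero_of_map_mul_eq_sq_sub_one hfun hw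
  induction n with
  | zero => exact .inl (by simpa using ⟨hw, hdeg⟩)
  | succ n ih =>
    rw [pow_succ', mul_assoc, hfun]
    rcases ih with ⟨hzero, hle⟩ | ⟨hone, hle⟩
    · refine .inr ⟨by simp [hzero], ?_⟩
      rw [localDegree_const_mul_of_map_eq_zero hc hfun (hΦ _) hzero]
      calc ((n + 1 : ℕ) : ℕ∞) + 3 ≤ 2 * (n + 2) := by norm_cast; omega
        _ ≤ 2 * localDegree Φ (c ^ n * w) := by gcongr
    · refine .inl ⟨by simp [hone], ?_⟩
      calc ((n + 1 : ℕ) : ℕ∞) + 2 = n + 3 := by push_cast; ring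
        _ ≤ localDegree Φ (c ^ n * w) := hle
        _ ≤ localDegree Φ (c * (c ^ n * w)) :=
          localDegree_le_localDegree_const_mul hc hfun (hΦ _)

theorem natCast_add_two_le_localDegree_orbit (hfun : ∀ z, Φ (c * z) = Φ z ^ 2 - 1)
    (hΦ : ∀ z, AnalyticAt 𝕜 Φ z) {w : 𝕜} (hw : Φ w = 0) (hdeg : 2 ≤ localDegree Φ w) (n : ℕ) :
    n + 2 ≤ localDegree Φ (c ^ n * w) := by
  rcases localDegree_orbit hfun hΦ hw hdeg n with ⟨-, hle⟩ | ⟨-, hle⟩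
  · exact hle
  · exact le_trans (by gcongr; norm_num) hle

end SemiconjSqSubOne

/-- Let `Φ` be entire with `Φ(λ·z) = Φ(z)² − 1`, and suppose `Φ(z̃) = 0` and
`Φ′(z̃) = 0`. Then for every `n ≥ 1` and every `1 ≤ k ≤ n`, the `k`-th
derivative of `Φ` vanishes at `λⁿ·z̃`; hence the local degree of `Φ` at
`λⁿ·z̃` is at least `n + 1`. -/
theorem poincare_function_unbounded_local_degree (Φ : ℂ → ℂ)
    (hdiff : Differentiable ℂ Φ) (lam : ℂ)
    (hfun : ∀ z : ℂ, Φ (lam * z) = (Φ z) ^ 2 - 1)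
    (zt : ℂ) (hz : Φ zt = 0) (hz' : deriv Φ zt = 0) :
    ∀ n k : ℕ, 1 ≤ n → 1 ≤ k → k ≤ n → iteratedDeriv k Φ (lam ^ n * zt) = 0 := by
  intro n k _ hk hkn
  have hΦ : ∀ z, AnalyticAt ℂ Φ z := hdiff.analyticAt
  have hdeg : 2 ≤ localDegree Φ zt := by
    refine (natCast_add_one_le_localDegree_iff (n := 1) (hΦ zt)).mpr fun k hk hk1 ↦ ?_
    obtain rfl : k = 1 := by omega
    simpa using hz'
  have hdeg_n : ((n + 1 + 1 : ℕ) : ℕ∞) ≤ localDegree Φ (lam ^ n * zt) := by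
    simpa [add_assoc, one_add_one_eq_two] using
      natCast_add_two_le_localDegree_orbit hfun hΦ hz hdeg n
  exact (natCast_add_one_le_localDegree_iff (hΦ _)).mp hdeg_n k hk (by omega)
end

section
/- For every z ∈ ℂ, the inequality |(1 − e^z)^{1/2}| · |1 − (1 − e^z)^{1/2}| ≤ √2 · |e^z| holds, where w^{1/2} denotes the principal branch of the square root (so that Re(w^{1/2}) ≥ 0). -/
/-!
With `s` the principal square root of `1 - e^z` we have `e^z = (1 - s)(1 + s)`, and `Re s ≥ 0`
puts `s` at least as close to `0` as to `-1`, so `|s| ≤ |1 + s|`. Hence the left-hand side is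
already at most `|e^z|`.
-/

open Complex

namespace Complex

lemma norm_le_norm_one_add_of_re_nonneg {s : ℂ} (hs : 0 ≤ s.re) : ‖s‖ ≤ ‖1 + s‖ := by
  refine (sq_le_sq₀ (norm_nonneg _) (norm_nonneg _)).mp ?_
  simp only [Complex.sq_norm, normSq_apply, add_re, add_im, one_re, one_im]
  nlinarith

lemma norm_mul_norm_one_sub_le_norm_one_sub_sq {s : ℂ} (hs : 0 ≤ s.re) :
    ‖s‖ * ‖1 - s‖ ≤ ‖1 - s ^ 2‖ :=
  calc ‖s‖ * ‖1 - s‖ ≤ ‖1 + s‖ * ‖1 - s‖ := by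
        gcongr; exact norm_le_norm_one_add_of_re_nonneg hs
    _ = ‖1 - s ^ 2‖ := by rw [← norm_mul]; ring_nf

lemma norm_cpow_half_mul_norm_one_sub_le (w : ℂ) :
    ‖w ^ ((1 : ℂ) / 2)‖ * ‖1 - w ^ ((1 : ℂ) / 2)‖ ≤ ‖1 - w‖ := by
  rw [one_div]
  have hre : 0 ≤ (w ^ (2⁻¹ : ℂ)).re := by
    rw [cpow_inv_two_re]
    exact Real.sqrt_nonneg _
  simpa using norm_mul_norm_one_sub_le_norm_one_sub_sq hre

end Complex

/-- For every `z ∈ ℂ`, `|√(1 − e^z)| · |1 − √(1 − e^z)| ≤ √2 · |e^z|`, where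
`√` denotes the principal branch of the square root. -/
theorem sqrt_one_sub_exp_estimate :
    ∀ z : ℂ,
      ‖(1 - Complex.exp z) ^ ((1 : ℂ) / 2)‖ *
        ‖1 - (1 - Complex.exp z) ^ ((1 : ℂ) / 2)‖ ≤
      Real.sqrt 2 * ‖Complex.exp z‖ := by
  intro z
  calc _ ≤ ‖1 - (1 - exp z)‖ := norm_cpow_half_mul_norm_one_sub_le _
    _ = ‖exp z‖ := by rw [sub_sub_cancel]
    _ ≤ Real.sqrt 2 * ‖exp z‖ :=
        le_mul_of_one_le_left (norm_nonneg _) (Real.one_le_sqrt.mpr one_le_two)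
end
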